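/- Let β > 1 and ω = (ω_1,…,ω_n) an admissible word. The cylinder I_n(ω) is full (i.e., |I_n(ω)| = β^{-n}) if and only if T_β^n(I_n(ω)) = [0,1), if and only if for every m ≥ 1 and every admissible word ω' of length m, the concatenation ω * ω' is admissible. -/

import Mathlib

open Filter MeasureTheory Set

noncomputable def betaT (β : ℝ) (x : ℝ) : ℝ := β * x - ⌊β * x⌋

noncomputable def eps (β x : ℝ) (n : ℕ) : ℤ := ⌊β * (betaT β)^[n - 1] x⌋

noncomputable def runLen (β x : ℝ) (n : ℕ) : ℕ :=
  sSup {j | ∃ i, i + j ≤ n ∧ ∀ k < j, eps β x (i + k + 1) = 0}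

def isAdmissible (β : ℝ) (n : ℕ) (ω : ℕ → ℤ) : Prop :=
  ∃ x ∈ Set.Ico (0 : ℝ) 1, ∀ k < n, eps β x (k + 1) = ω k

def cylinder (β : ℝ) (n : ℕ) (ω : ℕ → ℤ) : Set ℝ :=
  {x | x ∈ Set.Ico (0 : ℝ) 1 ∧ ∀ k < n, eps β x (k + 1) = ω k}

def isFull (β : ℝ) (n : ℕ) (ω : ℕ → ℤ) : Prop :=
  MeasureTheory.volume (cylinder β n ω) = ENNReal.ofReal (β ^ (-(n : ℤ)))

open Classical in
noncomputable def epsStar (β : ℝ) : ℕ → ℤ :=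
  if h : ∃ m, 1 ≤ m ∧ eps β 1 m ≠ 0 ∧ ∀ k, m < k → eps β 1 k = 0 then
    fun n =>
      if (n - 1) % Nat.find h + 1 = Nat.find h then eps β 1 (Nat.find h) - 1
      else eps β 1 ((n - 1) % Nat.find h + 1)
  else eps β 1

def lexLt (u v : ℕ → ℤ) : Prop := ∃ j, (∀ k < j, u k = v k) ∧ u j < v j

def lexLe (u v : ℕ → ℤ) : Prop := lexLt u v ∨ u = v

noncomputable def vbeta (β x : ℝ) : ℝ :=
  sSup {v | 0 ≤ v ∧ ∃ᶠ n : ℕ in atTop, (betaT β)^[n] x ≤ β ^ (-((n : ℝ) * v))}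

noncomputable def hatv (β x : ℝ) : ℝ :=
  sSup {v | 0 ≤ v ∧ ∀ᶠ N : ℕ in atTop, ∃ n, 1 ≤ n ∧ n ≤ N ∧ (betaT β)^[n] x ≤ β ^ (-(v * (N : ℝ)))}

/-!
On the cylinder `I_n(ω)` the map `T_β^n` is the affine map `x ↦ β^n x - c` with
`c = ω₀ β^{n-1} + ⋯ + ω_{n-1}`, and by induction on `n` the cylinder is a half-open interval.
Hence `T_β^n(I_n(ω))` is a half-open interval inside `[0,1)` of length `β^n |I_n(ω)|`, so it is all
of `[0,1)` exactly when the cylinder is full. A concatenation `ω * ω'` is admissible exactly when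
`T_β^n(I_n(ω))` meets `I_m(ω')`. Since cylinders of length `m` have diameter at most `β^{-m}`,
meeting every admissible cylinder forces `T_β^n(I_n(ω))` to be dense in `[0,1)`, hence equal to it.
-/

lemma Ico_eq_of_subset_of_volume_eq {a b c d : ℝ} (hab : a < b) (hsub : Ico a b ⊆ Ico c d)
    (hvol : volume (Ico a b) = volume (Ico c d)) : Ico a b = Ico c d := by
  obtain ⟨hca, hbd⟩ := (Ico_subset_Ico_iff hab).mp hsub
  rw [Real.volume_Ico, Real.volume_Ico,
    ENNReal.ofReal_eq_ofReal_iff (by linarith) (by linarith)] at hvol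
  rw [Ico_eq_Ico_iff (Or.inl hab)]
  constructor <;> linarith

lemma Ico_eq_of_subset_of_subset_closure {α : Type*} [LinearOrder α] [TopologicalSpace α]
    [OrderTopology α] [DenselyOrdered α] {a b c d : α} (hab : a < b) (hcd : c < d)
    (hsub : Ico a b ⊆ Ico c d) (hdense : Ico c d ⊆ closure (Ico a b)) : Ico a b = Ico c d := by
  have hcl := closure_mono hdense
  rw [closure_closure, closure_Ico hcd.ne, closure_Ico hab.ne, Icc_subset_Icc_iff hcd.le] at hcl
  obtain ⟨hca, hbd⟩ := (Ico_subset_Ico_iff hab).mp hsub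
  rw [le_antisymm hca hcl.1, le_antisymm hbd hcl.2]

section BetaTransformation

variable {β x : ℝ} {n m : ℕ} {ω ω' : ℕ → ℤ}

lemma betaT_mem_Ico (β x : ℝ) : betaT β x ∈ Ico (0 : ℝ) 1 :=
  ⟨Int.fract_nonneg _, Int.fract_lt_one _⟩

lemma mapsTo_iterate_betaT (β : ℝ) (n : ℕ) : MapsTo (betaT β)^[n] (Ico 0 1) (Ico 0 1) :=
  MapsTo.iterate (fun x _ => betaT_mem_Ico β x) n

lemma eps_succ (β x : ℝ) (k : ℕ) : eps β x (k + 1) = ⌊β * (betaT β)^[k] x⌋ := rfl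

lemma eps_add_succ (β x : ℝ) (n k : ℕ) :
    eps β x (n + k + 1) = eps β ((betaT β)^[n] x) (k + 1) := by
  rw [eps_succ, eps_succ, ← Function.iterate_add_apply, add_comm k n]

lemma isAdmissible_iff_nonempty : isAdmissible β n ω ↔ (cylinder β n ω).Nonempty :=
  ⟨fun ⟨x, hx, h⟩ => ⟨x, hx, h⟩, fun ⟨x, hx, h⟩ => ⟨x, hx, h⟩⟩

noncomputable def wordValue (β : ℝ) (ω : ℕ → ℤ) : ℕ → ℝ
  | 0 => 0
  | k + 1 => β * wordValue β ω k + ω k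

lemma iterate_betaT_eq (h : ∀ k < n, eps β x (k + 1) = ω k) :
    (betaT β)^[n] x = β ^ n * x - wordValue β ω n := by
  induction n with
  | zero => simp [wordValue]
  | succ n ih =>
    have hn : (betaT β)^[n] x = β ^ n * x - wordValue β ω n := ih fun k hk => h k (by omega)
    have hdigit : ⌊β * (β ^ n * x - wordValue β ω n)⌋ = ω n := by
      rw [← hn, ← eps_succ]; exact h n n.lt_add_one
    rw [Function.iterate_succ_apply', hn, betaT, hdigit, wordValue]
    ring

lemma cylinder_succ (β : ℝ) (n : ℕ) (ω : ℕ → ℤ) :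
    cylinder β (n + 1) ω = cylinder β n ω ∩
      (fun x => β ^ (n + 1) * x + -(β * wordValue β ω n)) ⁻¹' Ico (ω n : ℝ) (ω n + 1) := by
  ext x
  simp only [_root_.cylinder, mem_inter_iff, mem_ofPred_eq, mem_preimage, Nat.forall_lt_succ_right]
  rw [← and_assoc]
  refine and_congr_right fun ⟨_, hlt⟩ => ?_
  rw [eps_succ, iterate_betaT_eq hlt, mem_Ico, ← Int.floor_eq_iff]
  ring_nf

lemma exists_cylinder_eq_Ico (hβ : 0 < β) (ω : ℕ → ℤ) :
    ∀ n, ∃ A B : ℝ, cylinder β n ω = Ico A B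
  | 0 => ⟨0, 1, by ext; simp [_root_.cylinder]⟩
  | n + 1 => by
    obtain ⟨A, B, hAB⟩ := exists_cylinder_eq_Ico hβ ω n
    rw [cylinder_succ, hAB, show (fun x => β ^ (n + 1) * x + -(β * wordValue β ω n)) =
      (· + -(β * wordValue β ω n)) ∘ (β ^ (n + 1) * ·) from rfl, preimage_comp,
      preimage_add_const_Ico, preimage_const_mul_Ico₀ _ _ (pow_pos hβ _), Ico_inter_Ico]
    exact ⟨_, _, rfl⟩

lemma image_iterate_cylinder {A B : ℝ} (hβ : 0 < β) (hAB : cylinder β n ω = Ico A B) :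
    (betaT β)^[n] '' cylinder β n ω =
      Ico (β ^ n * A + -wordValue β ω n) (β ^ n * B + -wordValue β ω n) := by
  rw [image_congr fun x hx => iterate_betaT_eq hx.2, hAB]
  simp only [sub_eq_add_neg]
  exact image_affine_Ico (pow_pos hβ n) _ _ _

lemma volume_image_iterate_cylinder (hβ : 0 < β) :
    volume ((betaT β)^[n] '' cylinder β n ω) = ENNReal.ofReal (β ^ n) * volume (cylinder β n ω) := by
  obtain ⟨A, B, hAB⟩ := exists_cylinder_eq_Ico hβ ω n
  rw [image_iterate_cylinder hβ hAB, hAB, Real.volume_Ico, Real.volume_Ico,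
    ← ENNReal.ofReal_mul (pow_nonneg hβ.le n)]
  ring_nf

lemma image_iterate_cylinder_subset : (betaT β)^[n] '' cylinder β n ω ⊆ Ico 0 1 :=
  ((mapsTo_iterate_betaT β n).mono_left fun _ hx => hx.1).image_subset

lemma exists_image_iterate_cylinder_eq_Ico (hβ : 0 < β) (hadm : isAdmissible β n ω) :
    ∃ a b : ℝ, a < b ∧ (betaT β)^[n] '' cylinder β n ω = Ico a b := by
  obtain ⟨A, B, hAB⟩ := exists_cylinder_eq_Ico hβ ω n
  have hne := (isAdmissible_iff_nonempty.mp hadm).image (betaT β)^[n]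
  rw [image_iterate_cylinder hβ hAB] at hne ⊢
  exact ⟨_, _, nonempty_Ico.mp hne, rfl⟩

lemma isFull_iff_volume_image_eq_one (hβ : 0 < β) :
    isFull β n ω ↔ volume ((betaT β)^[n] '' cylinder β n ω) = 1 := by
  have hinv : ENNReal.ofReal (β ^ (-(n : ℤ))) = (ENNReal.ofReal (β ^ n))⁻¹ := by
    rw [zpow_neg, zpow_natCast, ENNReal.ofReal_inv_of_pos (pow_pos hβ n)]
  rw [isFull, volume_image_iterate_cylinder hβ, hinv]
  constructor
  · intro h
    rw [h, ENNReal.mul_inv_cancel (by simpa using pow_pos hβ n) ENNReal.ofReal_ne_top]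
  · intro h
    exact ENNReal.eq_inv_of_mul_eq_one_left (by rwa [mul_comm])

lemma isFull_iff_image_iterate_cylinder_eq (hβ : 0 < β) (hadm : isAdmissible β n ω) :
    isFull β n ω ↔ (betaT β)^[n] '' cylinder β n ω = Ico 0 1 := by
  obtain ⟨a, b, hab, hJ⟩ := exists_image_iterate_cylinder_eq_Ico hβ hadm
  have hsub : Ico a b ⊆ Ico 0 1 := hJ ▸ image_iterate_cylinder_subset
  rw [isFull_iff_volume_image_eq_one hβ, hJ]
  refine ⟨fun h => Ico_eq_of_subset_of_volume_eq hab hsub (by simpa using h), fun h => ?_⟩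
  simp [h]

lemma isAdmissible_append_iff :
    isAdmissible β (n + m) (fun k => if k < n then ω k else ω' (k - n)) ↔
      ((betaT β)^[n] '' cylinder β n ω ∩ cylinder β m ω').Nonempty := by
  constructor
  · rintro ⟨x, hx, hdigits⟩
    refine ⟨(betaT β)^[n] x, ⟨x, ⟨hx, fun k hk => ?_⟩, rfl⟩,
      mapsTo_iterate_betaT β n hx, fun k hk => ?_⟩
    · simpa [hk] using hdigits k (by omega)
    · simpa [← eps_add_succ] using hdigits (n + k) (by omega)
  · rintro ⟨_, ⟨x, hx, rfl⟩, -, hdigits⟩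
    refine ⟨x, hx.1, fun k hk => ?_⟩
    dsimp only
    split_ifs with hkn
    · exact hx.2 k hkn
    · obtain ⟨j, rfl⟩ := Nat.exists_eq_add_of_le (not_lt.mp hkn)
      simpa [eps_add_succ] using hdigits j (by omega)

lemma dist_lt_of_mem_cylinder {y : ℝ} (hβ : 0 < β) (hx : x ∈ cylinder β m ω')
    (hy : y ∈ cylinder β m ω') : dist x y < (β ^ m)⁻¹ := by
  have hTx := mapsTo_iterate_betaT β m hx.1
  have hTy := mapsTo_iterate_betaT β m hy.1
  rw [iterate_betaT_eq hx.2, mem_Ico] at hTx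
  rw [iterate_betaT_eq hy.2, mem_Ico] at hTy
  rw [Real.dist_eq, ← mul_one (β ^ m)⁻¹, lt_inv_mul_iff₀ (pow_pos hβ m),
    ← abs_of_pos (pow_pos hβ m), ← abs_mul, abs_lt]
  constructor <;> linarith

lemma exists_isAdmissible_cylinder_subset_ball {z ε : ℝ} (hβ : 1 < β) (hz : z ∈ Ico 0 1)
    (hε : 0 < ε) :
    ∃ m, 1 ≤ m ∧ ∃ ω', isAdmissible β m ω' ∧ cylinder β m ω' ⊆ Metric.ball z ε := by
  obtain ⟨m, hm, hmε⟩ := ((eventually_ge_atTop 1).and ((tendsto_inv_atTop_zero.comp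
    (tendsto_pow_atTop_atTop_of_one_lt hβ)).eventually (gt_mem_nhds hε))).exists
  have hzc : z ∈ cylinder β m (fun k => eps β z (k + 1)) := ⟨hz, fun _ _ => rfl⟩
  exact ⟨m, hm, _, isAdmissible_iff_nonempty.mpr ⟨z, hzc⟩,
    fun y hy => (dist_lt_of_mem_cylinder (zero_lt_one.trans hβ) hy hzc).trans hmε⟩

lemma forall_isAdmissible_append_of_image_eq
    (h : (betaT β)^[n] '' cylinder β n ω = Ico 0 1) (m : ℕ) (ω' : ℕ → ℤ)
    (hadm' : isAdmissible β m ω') :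
    isAdmissible β (n + m) (fun k => if k < n then ω k else ω' (k - n)) := by
  obtain ⟨y, hy⟩ := isAdmissible_iff_nonempty.mp hadm'
  exact isAdmissible_append_iff.mpr ⟨y, h ▸ hy.1, hy⟩

lemma image_iterate_cylinder_eq_of_forall_isAdmissible_append (hβ : 1 < β)
    (hadm : isAdmissible β n ω)
    (happend : ∀ m : ℕ, 1 ≤ m → ∀ ω' : ℕ → ℤ, isAdmissible β m ω' →
      isAdmissible β (n + m) (fun k => if k < n then ω k else ω' (k - n))) :
    (betaT β)^[n] '' cylinder β n ω = Ico 0 1 := by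
  obtain ⟨a, b, hab, hJ⟩ := exists_image_iterate_cylinder_eq_Ico (zero_lt_one.trans hβ) hadm
  rw [hJ]
  refine Ico_eq_of_subset_of_subset_closure hab zero_lt_one (hJ ▸ image_iterate_cylinder_subset)
    fun z hz => Metric.mem_closure_iff.mpr fun ε hε => ?_
  obtain ⟨m, hm, ω', hadm', hball⟩ := exists_isAdmissible_cylinder_subset_ball hβ hz hε
  obtain ⟨y, hyJ, hy⟩ := isAdmissible_append_iff.mp (happend m hm ω' hadm')
  exact ⟨y, hJ ▸ hyJ, by rw [dist_comm]; exact hball hy⟩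

end BetaTransformation

theorem stmt12_general (β : ℝ) (hβ : 1 < β) (n : ℕ) (ω : ℕ → ℤ)
    (hadm : isAdmissible β n ω) :
    (isFull β n ω ↔ (betaT β)^[n] '' cylinder β n ω = Set.Ico (0 : ℝ) 1) ∧
    (isFull β n ω ↔ ∀ m : ℕ, 1 ≤ m → ∀ ω' : ℕ → ℤ, isAdmissible β m ω' →
      isAdmissible β (n + m) (fun k => if k < n then ω k else ω' (k - n))) := by
  have hfull := isFull_iff_image_iterate_cylinder_eq (zero_lt_one.trans hβ) hadm
  exact ⟨hfull, hfull.trans ⟨fun h m _ => forall_isAdmissible_append_of_image_eq h m,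
    image_iterate_cylinder_eq_of_forall_isAdmissible_append hβ hadm⟩⟩

theorem stmt12 (β : ℝ) (hβ : 1 < β) (n : ℕ) (hn : 1 ≤ n) (ω : ℕ → ℤ)
    (hadm : isAdmissible β n ω) :
    (isFull β n ω ↔ (betaT β)^[n] '' cylinder β n ω = Set.Ico (0 : ℝ) 1) ∧
    (isFull β n ω ↔ ∀ m : ℕ, 1 ≤ m → ∀ ω' : ℕ → ℤ, isAdmissible β m ω' →
      isAdmissible β (n + m) (fun k => if k < n then ω k else ω' (k - n))) :=
  stmt12_general β hβ n ω hadm
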